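/- Every entanglement breaking channel Λ(T) = ∑ₓ tr[ρₓT]·F(x) is n-incompatibility breaking for every n: given POVMs A₁,…,Aₙ, the map G(a₁,…,aₙ) = ∑ₓ tr[ρₓA₁(a₁)]⋯tr[ρₓAₙ(aₙ)]·F(x) is a joint POVM for Λ∘A₁,…,Λ∘Aₙ. -/

import Mathlib

open scoped BigOperators ComplexOrder
open Matrix Finset

abbrev Mat (d : ℕ) := Matrix (Fin d) (Fin d) ℂ

/-- A POVM with finite outcome set `Ω`. -/
def IsPOVM {d : ℕ} {Ω : Type} [Fintype Ω] (A : Ω → Mat d) : Prop :=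
  (∀ a, (A a).PosSemidef) ∧ ∑ a, A a = 1

/-- `G` is a joint observable for the family `A` of POVMs. -/
def IsJoint {d n : ℕ} {Ω : Fin n → Type} [∀ i, Fintype (Ω i)] [∀ i, DecidableEq (Ω i)]
    (A : ∀ i, Ω i → Mat d) (G : (∀ i, Ω i) → Mat d) : Prop :=
  IsPOVM G ∧ ∀ (i : Fin n) (a : Ω i), ∑ g ∈ univ.filter (fun g => g i = a), G g = A i a

/-- The POVMs `A i` are compatible (jointly measurable). -/
def Compatible {d n : ℕ} {Ω : Fin n → Type} [∀ i, Fintype (Ω i)] [∀ i, DecidableEq (Ω i)]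
    (A : ∀ i, Ω i → Mat d) : Prop :=
  ∃ G, IsJoint A G

/-!
For each `x`, the Born rule turns the state `ρₓ` and the POVMs `Aᵢ` into probability vectors
`a ↦ tr[ρₓAᵢ(a)]`; their product is a probability vector on joint outcomes whose `i`-th marginal is
the `i`-th factor. Post-processing the POVM `F` with these product distributions therefore gives a
POVM whose marginals are the post-processings `Λ ∘ Aᵢ`.
-/

open scoped MatrixOrder in
theorem Matrix.PosSemidef.trace_mul_nonneg {𝕜 ι : Type*} [RCLike 𝕜] [Fintype ι]
    {P Q : Matrix ι ι 𝕜} (hP : P.PosSemidef) (hQ : Q.PosSemidef) : 0 ≤ (P * Q).trace := by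
  classical
  obtain ⟨B, rfl⟩ := CStarAlgebra.nonneg_iff_eq_star_mul_self.mp hP.nonneg
  rw [star_eq_conjTranspose, Matrix.mul_assoc, trace_mul_comm]
  exact (hQ.mul_mul_conjTranspose_same B).trace_nonneg

theorem IsPOVM.trace_mul_mem_stdSimplex {d : ℕ} {Ω : Type} [Fintype Ω] {A : Ω → Mat d}
    (hA : IsPOVM A) {ρ : Mat d} (hρ : ρ.PosSemidef) (hρ1 : ρ.trace = 1) :
    (fun a => (ρ * A a).trace) ∈ stdSimplex ℂ Ω := by
  refine ⟨fun a => hρ.trace_mul_nonneg (hA.1 a), ?_⟩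
  rw [← trace_sum, ← Finset.mul_sum, hA.2, Matrix.mul_one, hρ1]

theorem IsPOVM.postProcessing {d : ℕ} {X Y : Type} [Fintype X] [Fintype Y] {F : X → Mat d}
    (hF : IsPOVM F) {p : X → Y → ℂ} (hp : ∀ x, p x ∈ stdSimplex ℂ Y) :
    IsPOVM (fun y => ∑ x, p x y • F x) := by
  refine ⟨fun y => posSemidef_sum _ fun x _ => (hF.1 x).smul ((hp x).1 y), ?_⟩
  rw [Finset.sum_comm]
  simp_rw [← Finset.sum_smul, (hp _).2, one_smul]
  exact hF.2

section ProductDistribution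

variable {R ι : Type*} [CommSemiring R] [Fintype ι] [DecidableEq ι]
  {Ω : ι → Type*} [∀ i, Fintype (Ω i)]

theorem pi_prod_mem_stdSimplex [PartialOrder R] [IsOrderedRing R] {p : ∀ i, Ω i → R}
    (hp : ∀ i, p i ∈ stdSimplex R (Ω i)) :
    (fun g => ∏ i, p i (g i)) ∈ stdSimplex R (∀ i, Ω i) :=
  ⟨fun g => prod_nonneg fun i _ => (hp i).1 (g i), by
    rw [← Fintype.prod_sum]
    exact prod_eq_one fun i _ => (hp i).2⟩

theorem sum_filter_prod_eq_of_sum_eq_one [∀ i, DecidableEq (Ω i)] {p : ∀ i, Ω i → R}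
    (hp : ∀ i, ∑ b, p i b = 1) (i : ι) (a : Ω i) :
    ∑ g ∈ univ.filter (fun g : ∀ j, Ω j => g i = a), ∏ j, p j (g j) = p i a := by
  rw [← Fintype.piFinset_univ, ← Fintype.piFinset_update_singleton_eq_filter_piFinset_eq _ i
    (mem_univ a), ← prod_univ_sum, prod_eq_single i]
  · simp
  · intro j _ hj
    simpa [Function.update_of_ne hj] using hp j
  · simp

end ProductDistribution

/-- Every entanglement breaking channel `Λ(T) = ∑ₓ tr[ρₓT]·F(x)` (Holevo
form) is `n`-incompatibility breaking for every `n`: the map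
`G(a₁,…,aₙ) = ∑ₓ tr[ρₓA₁(a₁)]⋯tr[ρₓAₙ(aₙ)]·F(x)` is a joint POVM for `Λ∘A₁,…,Λ∘Aₙ`. -/
theorem EB_is_nIBC {d n : ℕ} (X : Type) [Fintype X]
    (ρ : X → Mat d) (hρ : ∀ x, (ρ x).PosSemidef) (hρ1 : ∀ x, (ρ x).trace = 1)
    (F : X → Mat d) (hF : IsPOVM F)
    (Ω : Fin n → Type) [∀ i, Fintype (Ω i)] [∀ i, DecidableEq (Ω i)]
    (A : ∀ i, Ω i → Mat d) (hA : ∀ i, IsPOVM (A i)) :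
    IsJoint (fun i a => ∑ x, (ρ x * A i a).trace • F x)
        (fun g => ∑ x, (∏ i, (ρ x * A i (g i)).trace) • F x) ∧
      Compatible (fun i a => ∑ x, (ρ x * A i a).trace • F x) := by
  have born : ∀ x i, (fun a => (ρ x * A i a).trace) ∈ stdSimplex ℂ (Ω i) :=
    fun x i => (hA i).trace_mul_mem_stdSimplex (hρ x) (hρ1 x)
  have joint : IsJoint (fun i a => ∑ x, (ρ x * A i a).trace • F x)
      (fun g => ∑ x, (∏ i, (ρ x * A i (g i)).trace) • F x) := by
    refine ⟨hF.postProcessing fun x => pi_prod_mem_stdSimplex (born x), fun i a => ?_⟩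
    rw [Finset.sum_comm]
    simp_rw [← Finset.sum_smul, sum_filter_prod_eq_of_sum_eq_one (fun j => (born _ j).2)]
  exact ⟨joint, _, joint⟩
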